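/- arXiv:2208.14441 — 3 statements merged into one kernel-verified Lean document; each statement's English description precedes it below -/
import Mathlib

section
/- For the two-voter instance where voter v delegates bundle S1={c1,c2} with budget 0.5, default [0.5,0], threshold 0.8 to voter u, and bundle S2={c3,c4} with budget 0.5, default [0.5,0], threshold 0.8 to u; and voter u delegates S3={c1,c4} with budget 0.5, default [0,0.5], threshold 0.7 to v, and S4={c2,c3} with budget 0.5, default [0,0.5], threshold 0.4 to v, there exists no solution satisfying Exact Proportionality with Thresholds (EP-T). -/
/-- EP-T condition for a two-candidate bundle {a,b} delegated by a voter with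
vote `z` to a delegate with vote `y`, with budget `bud`, threshold `eps`, and
default `(da, db)` on the two candidates. -/
def EPT2 (z y : Fin 4 → ℝ) (a b : Fin 4) (bud eps da db : ℝ) : Prop :=
  (y a + y b ≥ eps →
    z a * (y a + y b) = y a * bud ∧ z b * (y a + y b) = y b * bud) ∧
  (y a + y b < eps → z a = da ∧ z b = db)

/-- the specific two-voter instance has no solution under (EP-T). -/
theorem ept_no_solution :
    ¬ ∃ xv xu : Fin 4 → ℝ,
      (∀ c, 0 ≤ xv c) ∧ (∀ c, 0 ≤ xu c) ∧
      (xv 0 + xv 1 + xv 2 + xv 3 = 1) ∧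
      (xu 0 + xu 1 + xu 2 + xu 3 = 1) ∧
      (xv 0 + xv 1 = 0.5) ∧ (xv 2 + xv 3 = 0.5) ∧
      (xu 0 + xu 3 = 0.5) ∧ (xu 1 + xu 2 = 0.5) ∧
      -- v delegates S1 = {c1,c2} to u: budget 0.5, default [0.5,0], threshold 0.8
      EPT2 xv xu 0 1 0.5 0.8 0.5 0 ∧
      -- v delegates S2 = {c3,c4} to u: budget 0.5, default [0.5,0], threshold 0.8
      EPT2 xv xu 2 3 0.5 0.8 0.5 0 ∧
      -- u delegates S3 = {c1,c4} to v: budget 0.5, default [0,0.5], threshold 0.7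
      EPT2 xu xv 0 3 0.5 0.7 0 0.5 ∧
      -- u delegates S4 = {c2,c3} to v: budget 0.5, default [0,0.5], threshold 0.4
      EPT2 xu xv 1 2 0.5 0.4 0 0.5 := by
  rintro ⟨xv, xu, hv0, hu0, hvs, hus, hv01, hv23, hu03, hu12, e1, e2, e3, e4⟩
  unfold EPT2 at e1 e2 e3 e4
  obtain ⟨e1h, e1l⟩ := e1
  obtain ⟨e2h, e2l⟩ := e2
  obtain ⟨e3h, e3l⟩ := e3
  obtain ⟨e4h, e4l⟩ := e4
  have hv0' := hv0 0; have hv1' := hv0 1; have hv2' := hv0 2; have hv3' := hv0 3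
  have hu0' := hu0 0; have hu1' := hu0 1; have hu2' := hu0 2; have hu3' := hu0 3
  by_cases h1 : xu 0 + xu 1 ≥ 0.8
  · obtain ⟨p0, p1⟩ := e1h h1
    obtain ⟨q2, q3⟩ := e2l (by linarith)
    obtain ⟨s0, s3⟩ := e3l (by nlinarith)
    linarith
  · push_neg at h1
    obtain ⟨p0, p1⟩ := e1l h1
    by_cases h2 : xu 2 + xu 3 ≥ 0.8
    · obtain ⟨q2, q3⟩ := e2h h2
      obtain ⟨r1, r2⟩ := e4l (by nlinarith)
      by_cases h3 : xv 0 + xv 3 ≥ 0.7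
      · obtain ⟨s0, s3⟩ := e3h h3
        nlinarith [sq_nonneg (xu 0 - 0.5), sq_nonneg (xv 3 - 0.25), mul_nonneg hu0' hv3']
      · push_neg at h3
        obtain ⟨s0, s3⟩ := e3l h3
        nlinarith
    · push_neg at h2
      obtain ⟨q2, q3⟩ := e2l h2
      obtain ⟨s0, s3⟩ := e3l (by linarith)
      obtain ⟨r1, r2⟩ := e4h (by linarith)
      rw [p1, q2] at r2
      linarith
end

section
/- The EP-TI interpolated best-response map g(y) = (y + (ε − ||y||_1)·d) / ||y + (ε − ||y||_1)·d||_1 · b, defined for nonnegative vectors y ∈ R^k with ||y||_1 < ε, together with g(y) = (y/||y||_1)·b for ||y||_1 ≥ ε, is continuous on the set of nonnegative vectors y with ||y||_1 ≤ 1, provided 0 < ε ≤ 1, b > 0, and d is a nonnegative vector with ||d||_1 = b. -/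
open Finset

/-- the EP-TI best-response map (exact proportionality above the
threshold, interpolation below it) is continuous on the set of nonnegative
vectors of ℓ1-norm at most 1. -/
theorem epti_continuous {k : ℕ} (ε b : ℝ) (hε0 : 0 < ε) (hε1 : ε ≤ 1)
    (hb : 0 < b) (d : Fin k → ℝ) (hd0 : ∀ c, 0 ≤ d c) (hd1 : ∑ c, d c = b) :
    ContinuousOn
      (fun (y : Fin k → ℝ) => fun c =>
        if (∑ i, y i) ≥ ε then y c / (∑ i, y i) * b
        else (y c + (ε - ∑ i, y i) * d c) /
          (∑ i, (y i + (ε - ∑ j, y j) * d i)) * b)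
      {y : Fin k → ℝ | (∀ c, 0 ≤ y c) ∧ (∑ c, y c) ≤ 1} := by
  have hsum : Continuous fun y : Fin k → ℝ => ∑ i, y i :=
    continuous_finset_sum _ fun i _ => continuous_apply i
  -- denominator identity for the lower branch
  have hden : ∀ y : Fin k → ℝ, (∑ i, (y i + (ε - ∑ j, y j) * d i))
      = (∑ i, y i) + (ε - ∑ j, y j) * b := by
    intro y
    rw [Finset.sum_add_distrib, ← Finset.mul_sum, hd1]
  rw [continuousOn_pi]
  intro c
  apply ContinuousOn.if
  · -- the two branches agree on the frontier ∑ y = ε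
    intro y hy
    have h2 := frontier_le_subset_eq (continuous_const : Continuous fun _ : Fin k → ℝ => ε)
      hsum hy.2
    have he : (∑ i, y i) = ε := h2.symm
    simp [hden, he]
  · -- upper branch: exact proportionality, denominator ≥ ε > 0
    have hcl : closure {y : Fin k → ℝ | (∑ i, y i) ≥ ε} ⊆ {y | ε ≤ ∑ i, y i} := by
      have : IsClosed {y : Fin k → ℝ | ε ≤ ∑ i, y i} := isClosed_le continuous_const hsum
      exact this.closure_eq.le
    apply ContinuousOn.mul _ continuousOn_const
    apply ContinuousOn.div ((continuous_apply c).continuousOn) hsum.continuousOn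
    intro y hy
    have : ε ≤ ∑ i, y i := hcl hy.2
    linarith
  · -- lower branch: interpolation, denominator ∑y + (ε - ∑y)·b > 0
    have hcl : closure {y : Fin k → ℝ | ¬ (∑ i, y i) ≥ ε} ⊆ {y | (∑ i, y i) ≤ ε} := by
      have h1 : {y : Fin k → ℝ | ¬ (∑ i, y i) ≥ ε} ⊆ {y | (∑ i, y i) ≤ ε} := by
        intro y hy; exact le_of_not_ge hy
      have : IsClosed {y : Fin k → ℝ | (∑ i, y i) ≤ ε} := isClosed_le hsum continuous_const
      exact this.closure_eq ▸ closure_mono h1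
    apply ContinuousOn.mul _ continuousOn_const
    apply ContinuousOn.div
    · exact ((continuous_apply c).add ((continuous_const.sub hsum).mul continuous_const)).continuousOn
    · exact (continuous_finset_sum _ fun i _ =>
        (continuous_apply i).add ((continuous_const.sub hsum).mul continuous_const)).continuousOn
    · intro y hy
      rw [hden]
      have ht0 : 0 ≤ ∑ i, y i := Finset.sum_nonneg fun i _ => hy.1.1 i
      have htε : (∑ i, y i) ≤ ε := hcl hy.2
      have hpos : 0 < (∑ i, y i) + (ε - ∑ j, y j) * b := by
        rcases lt_or_eq_of_le ht0 with h | h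
        · nlinarith
        · nlinarith [mul_pos hε0 hb]
      exact hpos.ne'
end

section
/- For the first case of the EP-T non-existence proof: in the instance of the two-voter EP-T example (v delegates {c1,c2} and {c3,c4} each with budget 0.5, default [0.5,0], threshold 0.8 to u; u delegates {c1,c4} with budget 0.5, default [0,0.5], threshold 0.7, and {c2,c3} with budget 0.5, default [0,0.5], threshold 0.4 to v), any solution x with x_{v,c1} + x_{v,c4} ≥ 0.7 leads to a contradiction: it forces x_{u,c2}=0, x_{u,c3}=0.5, then x_{v,c1}=0.5, x_{v,c2}=0, then x_{v,c3}=0.5, x_{v,c4}=0, giving x_{v,c1}+x_{v,c4}=0.5 < 0.7. -/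
/-- in the EP-T example, any solution with
`x_{v,c1} + x_{v,c4} ≥ 0.7` leads to a contradiction. -/
theorem ept_case_one (xv xu : Fin 4 → ℝ)
    (hv0 : ∀ c, 0 ≤ xv c) (hu0 : ∀ c, 0 ≤ xu c)
    (hv1 : xv 0 + xv 1 + xv 2 + xv 3 = 1)
    (hu1 : xu 0 + xu 1 + xu 2 + xu 3 = 1)
    (hvS1 : xv 0 + xv 1 = 0.5) (hvS2 : xv 2 + xv 3 = 0.5)
    (huS3 : xu 0 + xu 3 = 0.5) (huS4 : xu 1 + xu 2 = 0.5)
    -- v delegates S1 = {c1,c2} to u: budget 0.5, default [0.5,0], threshold 0.8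
    (h1 : EPT2 xv xu 0 1 0.5 0.8 0.5 0)
    -- v delegates S2 = {c3,c4} to u: budget 0.5, default [0.5,0], threshold 0.8
    (h2 : EPT2 xv xu 2 3 0.5 0.8 0.5 0)
    -- u delegates S3 = {c1,c4} to v: budget 0.5, default [0,0.5], threshold 0.7
    (h3 : EPT2 xu xv 0 3 0.5 0.7 0 0.5)
    -- u delegates S4 = {c2,c3} to v: budget 0.5, default [0,0.5], threshold 0.4
    (h4 : EPT2 xu xv 1 2 0.5 0.4 0 0.5)
    (hcase : xv 0 + xv 3 ≥ 0.7) :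
    False := by
  obtain ⟨h3a, -⟩ := h3
  obtain ⟨hu0', hu3'⟩ := h3a hcase
  obtain ⟨hx1, hx2⟩ := h4.2 (by linarith)
  obtain ⟨hy0, hy1⟩ := h1.2 (by have := hu0 3; linarith)
  by_cases hc : xu 2 + xu 3 ≥ 0.8
  · obtain ⟨hz2, hz3⟩ := h2.1 hc
    have ha : xu 3 ≥ 0.3 := by linarith
    nlinarith [hu3', hz3, hv0 3, hu0 3]
  · obtain ⟨hz2, hz3⟩ := h2.2 (by linarith)
    linarith
end
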